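/- arXiv:1910.12571 — 4 statements merged into one kernel-verified Lean document; each statement's English description precedes it below -/
import Mathlib

section
/- Let α ∈ [1,∞) and let d ≥ 1 be an integer. Then for every α ≥ 1, sup_{p ≥ 1} p^{-1/α}(p+1)^{-d/p} ≥ 1/(4·(d·log(d+1))^{1/α}). -/
private lemma log_le_div_e {y : ℝ} (hy : 0 < y) : Real.log y ≤ y / Real.exp 1 := by
  have h := Real.log_le_sub_one_of_pos (div_pos hy (Real.exp_pos 1))
  rw [Real.log_div (ne_of_gt hy) (Real.exp_ne_zero 1), Real.log_exp] at h
  linarith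

/-- For `α ∈ [1,∞)` and every integer `d ≥ 1`, the initial discrepancy with
respect to the norm `‖f‖_α = sup_{p ≥ 1} p^{-1/α} ‖f‖_{L_p}` satisfies
`sup_{p ≥ 1} p^{-1/α}(p+1)^{-d/p} ≥ 1/(4 (d log(d+1))^{1/α})`. -/
theorem initial_alpha_discrepancy_lower_bound (α : ℝ) (hα : 1 ≤ α) (d : ℕ) (hd : 1 ≤ d) :
    1 / (4 * ((d : ℝ) * Real.log (d + 1)) ^ (1 / α)) ≤
      ⨆ p : {p : ℝ // 1 ≤ p}, p.1 ^ (-(1 / α)) * (p.1 + 1) ^ (-((d : ℝ) / p.1)) := by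
  have hα0 : (0:ℝ) < α := by linarith
  have hια : 1 / α ≤ 1 := by
    rw [div_le_one hα0]; linarith
  have hια0 : 0 ≤ 1 / α := by positivity
  have hbdd : BddAbove (Set.range fun p : {p : ℝ // 1 ≤ p} =>
      p.1 ^ (-(1 / α)) * (p.1 + 1) ^ (-((d : ℝ) / p.1))) := by
    refine ⟨1, ?_⟩
    rintro x ⟨⟨p, hp⟩, rfl⟩
    have hp0 : (0:ℝ) < p := by linarith
    have h1 : p ^ (-(1/α)) ≤ 1 :=
      Real.rpow_le_one_of_one_le_of_nonpos hp (neg_nonpos.mpr hια0)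
    have h2 : (p + 1) ^ (-((d:ℝ)/p)) ≤ 1 :=
      Real.rpow_le_one_of_one_le_of_nonpos (by linarith) (neg_nonpos.mpr (by positivity))
    have h1' : (0:ℝ) ≤ p ^ (-(1/α)) := Real.rpow_nonneg hp0.le _
    exact mul_le_one₀ h1 (Real.rpow_nonneg (by linarith) _) h2
  rcases eq_or_lt_of_le hd with hd1 | hd2
  · -- d = 1, take p = 1
    have hd1' : d = 1 := hd1.symm
    subst hd1'
    have hlog2 : (0.6931471803 : ℝ) < Real.log 2 := Real.log_two_gt_d9
    have hlog2lt : Real.log 2 ≤ 1 := by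
      have := Real.log_two_lt_d9; linarith
    have key : (Real.log 2) ^ ((1:ℝ)) ≤ (Real.log 2) ^ (1/α) :=
      Real.rpow_le_rpow_of_exponent_ge (by linarith) hlog2lt hια
    rw [Real.rpow_one] at key
    have hval : 1 / (4 * ((1:ℝ) * Real.log 2) ^ (1/α)) ≤
        (1:ℝ) ^ (-(1/α)) * ((1:ℝ) + 1) ^ (-(((1:ℕ):ℝ)/(1:ℝ))) := by
      have hx : (0:ℝ) < (Real.log 2) ^ (1/α) := Real.rpow_pos_of_pos (by linarith) _
      have h12 : (1:ℝ)/2 ≤ (Real.log 2) ^ (1/α) := by linarith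
      rw [one_mul, Real.one_rpow, one_mul]
      have : (((1:ℕ):ℝ)/(1:ℝ)) = 1 := by norm_num
      rw [this, Real.rpow_neg_one]
      have h2 : ((1:ℝ)+1)⁻¹ = 1/2 := by norm_num
      rw [h2, div_le_div_iff₀ (by positivity) (by norm_num)]
      nlinarith
    calc 1 / (4 * (((1:ℕ):ℝ) * Real.log (((1:ℕ):ℝ) + 1)) ^ (1/α))
        = 1 / (4 * ((1:ℝ) * Real.log 2) ^ (1/α)) := by norm_num
      _ ≤ (1:ℝ) ^ (-(1/α)) * ((1:ℝ) + 1) ^ (-(((1:ℕ):ℝ)/(1:ℝ))) := hval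
      _ ≤ _ := le_ciSup hbdd ⟨1, le_refl 1⟩
  · -- d ≥ 2, take p = d * log (d+1)
    have hd2' : (2:ℝ) ≤ (d:ℝ) := by exact_mod_cast hd2
    set L : ℝ := Real.log ((d:ℝ) + 1) with hL
    have hL1 : 1 < L := by
      rw [hL, Real.lt_log_iff_exp_lt (by positivity)]
      have h1 := Real.exp_one_lt_d9
      have h3 : (3:ℝ) ≤ (d:ℝ) + 1 := by linarith
      linarith
    have hLpos : 0 < L := by linarith
    set p : ℝ := (d:ℝ) * L with hp
    have hp2 : (2:ℝ) ≤ p := by nlinarith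
    have hp1 : (1:ℝ) ≤ p := by linarith
    have hppos : (0:ℝ) < p := by linarith
    -- key: (p+1)^(d/p) ≤ 4
    have hlog4 : Real.log 4 = 2 * Real.log 2 := by
      rw [show (4:ℝ) = 2^2 by norm_num, Real.log_pow]; push_cast; ring
    have hcst : 1 + 1 / Real.exp 1 ≤ Real.log 4 := by
      rw [hlog4]
      have h1 := Real.log_two_gt_d9
      have h2 := Real.exp_one_gt_d9
      have he : (0:ℝ) < Real.exp 1 := Real.exp_pos 1
      have h3 : 1 / Real.exp 1 ≤ 0.368 := by
        rw [div_le_iff₀ he]; nlinarith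
      linarith
    have hlogp1 : Real.log (p + 1) ≤ L * Real.log 4 := by
      have h1 : p + 1 ≤ ((d:ℝ) + 1) * L := by nlinarith
      have h2 : Real.log (p + 1) ≤ Real.log (((d:ℝ)+1) * L) :=
        Real.log_le_log (by linarith) h1
      have h3 : Real.log (((d:ℝ)+1) * L) = L + Real.log L := by
        rw [Real.log_mul (by positivity) (ne_of_gt hLpos)]
      have h4 : Real.log L ≤ L / Real.exp 1 := log_le_div_e hLpos
      have h5 : L + L / Real.exp 1 ≤ L * Real.log 4 := by
        have : L * (1 + 1/Real.exp 1) ≤ L * Real.log 4 :=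
          mul_le_mul_of_nonneg_left hcst hLpos.le
        calc L + L / Real.exp 1 = L * (1 + 1/Real.exp 1) := by ring
          _ ≤ L * Real.log 4 := this
      calc Real.log (p+1) ≤ L + Real.log L := by rw [← h3]; exact h2
        _ ≤ L + L / Real.exp 1 := by linarith
        _ ≤ L * Real.log 4 := h5
    have hexp : ((d:ℝ)/p) * Real.log (p + 1) ≤ Real.log 4 := by
      have hd0 : (d:ℝ) ≠ 0 := by positivity
      have hdp : (d:ℝ)/p = 1/L := by
        rw [hp]; field_simp
      rw [hdp, div_mul_eq_mul_div, div_le_iff₀ hLpos]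
      nlinarith [hlogp1]
    have hpow4 : (p + 1) ^ ((d:ℝ)/p) ≤ 4 := by
      rw [Real.rpow_def_of_pos (by linarith)]
      have h := Real.exp_le_exp.mpr (show Real.log (p+1) * ((d:ℝ)/p) ≤ Real.log 4 by
        rw [mul_comm]; exact hexp)
      rw [Real.exp_log (by norm_num)] at h
      exact h
    have hpowpos : (0:ℝ) < (p + 1) ^ ((d:ℝ)/p) := Real.rpow_pos_of_pos (by linarith) _
    have hinv : (1:ℝ)/4 ≤ (p + 1) ^ (-((d:ℝ)/p)) := by
      rw [Real.rpow_neg (by linarith), one_div]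
      exact inv_anti₀ hpowpos hpow4
    have hXpos : (0:ℝ) < ((d:ℝ) * L) ^ (1/α) := Real.rpow_pos_of_pos (by positivity) _
    have hXneg : ((d:ℝ) * L) ^ (-(1/α)) = (((d:ℝ) * L) ^ (1/α))⁻¹ := by
      rw [Real.rpow_neg (by positivity)]
    have hval : 1 / (4 * ((d:ℝ) * L) ^ (1/α)) ≤
        p ^ (-(1/α)) * (p + 1) ^ (-((d:ℝ)/p)) := by
      have : p ^ (-(1/α)) = ((d:ℝ) * L) ^ (-(1/α)) := by rw [hp]
      rw [this, hXneg]
      rw [one_div, mul_inv]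
      calc (4:ℝ)⁻¹ * (((d:ℝ)*L)^(1/α))⁻¹
          = (((d:ℝ)*L)^(1/α))⁻¹ * (1/4) := by ring
        _ ≤ (((d:ℝ)*L)^(1/α))⁻¹ * (p+1)^(-((d:ℝ)/p)) := by
            apply mul_le_mul_of_nonneg_left hinv (by positivity)
    calc 1 / (4 * ((d:ℝ) * Real.log ((d:ℝ) + 1)) ^ (1/α))
        = 1 / (4 * ((d:ℝ) * L) ^ (1/α)) := by rw [hL]
      _ ≤ p ^ (-(1/α)) * (p + 1) ^ (-((d:ℝ)/p)) := hval
      _ ≤ _ := le_ciSup hbdd ⟨p, hp1⟩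
end

section
/- Let α ∈ [1,∞) and f: [0,1]^d → ℝ be measurable. Then ‖f‖_{ψ_α} ≥ (e^{11/12}/√(2π))^{1/α} · ‖f‖_α, where ‖f‖_α = sup_{p ≥ 1} p^{-1/α}‖f‖_{L_p}, ψ_α(x) = exp(x^α) − 1, and ‖f‖_{ψ_α} is the corresponding Luxemburg norm on [0,1]^d. -/
open MeasureTheory Real
open scoped ENNReal

/-- Lebesgue measure restricted to the unit cube `[0,1]^d` (a probability measure). -/
noncomputable def cubeMeasure (d : ℕ) : Measure (Fin d → ℝ) :=
  volume.restrict (Set.Icc 0 1)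

/-- The exponential Orlicz function `ψ_α(x) = exp(x^α) - 1`. -/
noncomputable def psiAlpha (α x : ℝ) : ℝ := Real.exp (x ^ α) - 1

/-- The Luxemburg (quasi-)norm on `[0,1]^d` associated with an Orlicz function `ψ`,
with value `∞` if no admissible constant `K` exists. -/
noncomputable def luxNorm (d : ℕ) (ψ : ℝ → ℝ) (f : (Fin d → ℝ) → ℝ) : ℝ≥0∞ :=
  sInf {K : ℝ≥0∞ | 0 < K ∧ K ≠ ⊤ ∧
    ∫⁻ x, ENNReal.ofReal (ψ (|f x| / K.toReal)) ∂(cubeMeasure d) ≤ 1}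

lemma exp_le_sqrt_two_pi : Real.exp (11/12) ≤ Real.sqrt (2*π) := by
  have h2 : Real.exp (11/6) ≤ 2*π := by
    have he : Real.exp 1 < 2.7182818286 := Real.exp_one_lt_d9
    have hpi : 3.141592 < π := Real.pi_gt_d6
    have h1 : ((25:ℝ)/24)^4 ≤ Real.exp (1/6) := by
      have h := Real.add_one_le_exp (1/24 : ℝ)
      have : ((25:ℝ)/24)^4 ≤ Real.exp (1/24) ^ 4 := by
        apply pow_le_pow_left₀ (by norm_num) (by linarith)
      calc ((25:ℝ)/24)^4 ≤ Real.exp (1/24) ^ 4 := this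
        _ = Real.exp ((4:ℕ) * (1/24)) := by rw [Real.exp_nat_mul]
        _ = Real.exp (1/6) := by norm_num
    have hmul : Real.exp (11/6) * Real.exp (1/6) = Real.exp 1 ^ 2 := by
      rw [← Real.exp_add, ← Real.exp_nat_mul]; norm_num
    nlinarith [Real.exp_pos (11/6 : ℝ), Real.exp_pos (1/6 : ℝ), Real.exp_pos (1:ℝ),
      Real.exp_pos (1/24:ℝ)]
  have h0 : (0:ℝ) ≤ Real.exp (11/12) := (Real.exp_pos _).le
  rw [show (11:ℝ)/6 = (11/12) + (11/12) by norm_num, Real.exp_add] at h2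
  nlinarith [Real.sq_sqrt (by positivity : (0:ℝ) ≤ 2*π), Real.sqrt_nonneg (2*π),
    Real.exp_pos (11/12:ℝ)]


lemma key_ineq {c : ℝ} (hc0 : 0 < c) (hc1 : c ≤ 1) {q u : ℝ} (hq : 1 ≤ q) (hu : 0 ≤ u) :
    u ^ q ≤ (q / c) ^ q * (Real.exp u - 1) := by
  have hq0 : (0:ℝ) < q := lt_of_lt_of_le one_pos hq
  have hqc : q ≤ q / c := by
    rw [le_div_iff₀ hc0]; nlinarith
  have hqc0 : (0:ℝ) < q / c := by positivity
  rcases eq_or_lt_of_le hu with h0 | hu0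
  · rw [← h0, Real.zero_rpow hq0.ne', Real.exp_zero]
    simp
  rcases le_or_gt u q with hcase | hcase
  · -- u ≤ q
    have h1 : u ^ q = u * u ^ (q - 1) := by
      rw [← Real.rpow_one_add' hu (by linarith)]; ring_nf
    have h2 : u ^ (q-1) ≤ q ^ (q-1) := Real.rpow_le_rpow hu hcase (by linarith)
    have h3 : q ^ (q-1) ≤ q ^ q := Real.rpow_le_rpow_of_exponent_le hq (by linarith)
    have h4 : q ^ q ≤ (q/c) ^ q := Real.rpow_le_rpow hq0.le hqc hq0.le
    have h5 : u ≤ Real.exp u - 1 := by linarith [Real.add_one_le_exp u]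
    calc u ^ q = u * u ^ (q-1) := h1
      _ ≤ (Real.exp u - 1) * (q/c)^q := by
          apply mul_le_mul h5 (by linarith) (Real.rpow_nonneg hu _) (by linarith)
      _ = (q/c)^q * (Real.exp u - 1) := by ring
  · -- q < u, so u ≥ 1
    have hu1 : 1 ≤ u := le_trans hq hcase.le
    have he : (2:ℝ) < Real.exp 1 := by
      have := Real.exp_one_gt_d9; linarith
    -- u^q ≤ (q/e)^q * exp u
    have hstep1 : u ^ q ≤ (q / Real.exp 1) ^ q * Real.exp u := by
      have ha : Real.exp 1 * (u / q) ≤ Real.exp (u / q) := by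
        have := Real.add_one_le_exp (u/q - 1)
        have h' : u/q ≤ Real.exp (u/q - 1) := by linarith
        calc Real.exp 1 * (u/q) ≤ Real.exp 1 * Real.exp (u/q - 1) := by
              apply mul_le_mul_of_nonneg_left h' (Real.exp_pos 1).le
          _ = Real.exp (u/q) := by rw [← Real.exp_add]; ring_nf
      have hb : (Real.exp 1 * (u / q)) ^ q ≤ Real.exp u := by
        calc (Real.exp 1 * (u/q))^q ≤ (Real.exp (u/q))^q :=
              Real.rpow_le_rpow (by positivity) ha hq0.le
          _ = Real.exp (u/q * q) := by rw [← Real.exp_mul]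
          _ = Real.exp u := by rw [div_mul_cancel₀ _ hq0.ne']
      have hc' : (Real.exp 1 * (u / q)) ^ q = (Real.exp 1 / q) ^ q * u ^ q := by
        rw [show Real.exp 1 * (u/q) = (Real.exp 1 / q) * u by ring,
          Real.mul_rpow (by positivity) hu]
      rw [hc'] at hb
      have hpos : (0:ℝ) < (Real.exp 1 / q) ^ q := Real.rpow_pos_of_pos (by positivity) _
      rw [show (q / Real.exp 1) ^ q = ((Real.exp 1 / q) ^ q)⁻¹ by
        rw [← Real.inv_rpow (by positivity), inv_div]]
      rw [← div_eq_inv_mul, le_div_iff₀ hpos, mul_comm]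
      exact hb
    -- exp u ≤ e/(e-1) * (exp u - 1)
    have hstep2 : Real.exp u ≤ Real.exp 1 / (Real.exp 1 - 1) * (Real.exp u - 1) := by
      rw [div_mul_eq_mul_div, le_div_iff₀ (by linarith)]
      have : Real.exp 1 ≤ Real.exp u := Real.exp_le_exp.mpr hu1
      nlinarith [Real.exp_pos u]
    -- (q/e)^q * (e/(e-1)) ≤ (q/c)^q
    have hstep3 : (q / Real.exp 1) ^ q * (Real.exp 1 / (Real.exp 1 - 1)) ≤ (q/c)^q := by
      have hsplit : (q/c)^q = (q / Real.exp 1) ^ q * (Real.exp 1 / c) ^ q := by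
        rw [← Real.mul_rpow (by positivity) (by positivity)]
        congr 1; field_simp
      rw [hsplit]
      apply mul_le_mul_of_nonneg_left _ (Real.rpow_nonneg (by positivity) _)
      have h1 : Real.exp 1 / (Real.exp 1 - 1) ≤ Real.exp 1 / c := by
        apply div_le_div_of_nonneg_left (Real.exp_pos 1).le hc0; linarith
      have h2 : Real.exp 1 / c ≤ (Real.exp 1 / c) ^ q := by
        calc Real.exp 1 / c = (Real.exp 1 / c) ^ (1:ℝ) := (Real.rpow_one _).symm
          _ ≤ (Real.exp 1 / c) ^ q := by
              apply Real.rpow_le_rpow_of_exponent_le _ hq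
              rw [le_div_iff₀ hc0]; nlinarith
      linarith
    have hexp1 : 0 ≤ Real.exp u - 1 := by
      linarith [Real.add_one_le_exp u]
    calc u ^ q ≤ (q / Real.exp 1) ^ q * Real.exp u := hstep1
      _ ≤ (q / Real.exp 1) ^ q * (Real.exp 1 / (Real.exp 1 - 1) * (Real.exp u - 1)) := by
          apply mul_le_mul_of_nonneg_left hstep2 (Real.rpow_nonneg (by positivity) _)
      _ = (q / Real.exp 1) ^ q * (Real.exp 1 / (Real.exp 1 - 1)) * (Real.exp u - 1) := by ring
      _ ≤ (q/c)^q * (Real.exp u - 1) := by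
          apply mul_le_mul_of_nonneg_right hstep3 hexp1

lemma cubeMeasure_prob (d : ℕ) : IsProbabilityMeasure (cubeMeasure d) := by
  constructor
  rw [cubeMeasure, Measure.restrict_apply_univ, Real.volume_Icc_pi]
  simp

lemma lint_core {d : ℕ} {f : (Fin d → ℝ) → ℝ} {α K' r B : ℝ}
    (hK' : 0 < K') (hr : 0 ≤ r) (hB : 0 ≤ B)
    (hpt : ∀ t : ℝ, 0 ≤ t → t ^ r ≤ B * (Real.exp (t ^ α) - 1))
    (hint : ∫⁻ x, ENNReal.ofReal (psiAlpha α (|f x| / K')) ∂(cubeMeasure d) ≤ 1) :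
    ∫⁻ x, (‖f x‖₊ : ℝ≥0∞) ^ r ∂(cubeMeasure d) ≤ ENNReal.ofReal B * ENNReal.ofReal (K' ^ r) := by
  have heq : ∀ x, (‖f x‖₊ : ℝ≥0∞) ^ r
      = ENNReal.ofReal (K' ^ r) * ENNReal.ofReal ((|f x| / K') ^ r) := by
    intro x
    rw [← ENNReal.ofReal_mul (by positivity), ← Real.mul_rpow hK'.le (by positivity),
      mul_div_cancel₀ _ hK'.ne', ← Real.norm_eq_abs,
      ← ENNReal.ofReal_rpow_of_nonneg (norm_nonneg _) hr, ofReal_norm]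
    rfl
  calc ∫⁻ x, (‖f x‖₊ : ℝ≥0∞) ^ r ∂(cubeMeasure d)
      = ENNReal.ofReal (K' ^ r) * ∫⁻ x, ENNReal.ofReal ((|f x| / K') ^ r) ∂(cubeMeasure d) := by
        simp_rw [heq]
        rw [lintegral_const_mul' _ _ ENNReal.ofReal_ne_top]
    _ ≤ ENNReal.ofReal (K' ^ r) * (ENNReal.ofReal B * 1) := by
        gcongr
        calc ∫⁻ x, ENNReal.ofReal ((|f x| / K') ^ r) ∂(cubeMeasure d)
            ≤ ∫⁻ x, ENNReal.ofReal B * ENNReal.ofReal (psiAlpha α (|f x| / K'))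
                ∂(cubeMeasure d) := by
              apply lintegral_mono
              intro x
              dsimp only
              rw [← ENNReal.ofReal_mul hB]
              simp only [psiAlpha]
              exact ENNReal.ofReal_le_ofReal (hpt _ (by positivity))
          _ = ENNReal.ofReal B * ∫⁻ x, ENNReal.ofReal (psiAlpha α (|f x| / K'))
                ∂(cubeMeasure d) := lintegral_const_mul' _ _ ENNReal.ofReal_ne_top
          _ ≤ ENNReal.ofReal B * 1 := by gcongr
    _ = ENNReal.ofReal B * ENNReal.ofReal (K' ^ r) := by
        rw [mul_one, mul_comm]

/-- For `α ≥ 1` and measurable `f : [0,1]^d → ℝ`, the exponential Orlicz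
(Luxemburg) norm satisfies `‖f‖_{ψ_α} ≥ (e^{11/12}/√(2π))^{1/α} ‖f‖_α`, where
`‖f‖_α = sup_{p ≥ 1} p^{-1/α}‖f‖_{L_p}`. -/
theorem psi_alpha_lower_bound (α : ℝ) (hα : 1 ≤ α) (d : ℕ)
    (f : (Fin d → ℝ) → ℝ) (hf : Measurable f) :
    ENNReal.ofReal ((Real.exp (11 / 12) / Real.sqrt (2 * π)) ^ (1 / α)) *
        (⨆ p : {p : ℝ // 1 ≤ p},
          ENNReal.ofReal (p.1 ^ (-(1 / α))) * eLpNorm f (ENNReal.ofReal p.1) (cubeMeasure d)) ≤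
      luxNorm d (psiAlpha α) f := by
  haveI := cubeMeasure_prob d
  have hα0 : (0:ℝ) < α := lt_of_lt_of_le one_pos hα
  set c : ℝ := Real.exp (11 / 12) / Real.sqrt (2 * π) with hcdef
  have hc0 : 0 < c := by
    apply div_pos (Real.exp_pos _) (Real.sqrt_pos.mpr (by positivity))
  have hc1 : c ≤ 1 := div_le_one_of_le₀ exp_le_sqrt_two_pi (Real.sqrt_nonneg _)
  refine le_sInf fun K hK => ?_
  obtain ⟨hK0, hKt, hKint⟩ := hK
  set K' : ℝ := K.toReal with hK'def
  have hK'0 : 0 < K' := ENNReal.toReal_pos hK0.ne' hKt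
  have hKofReal : ENNReal.ofReal K' = K := ENNReal.ofReal_toReal hKt
  rw [ENNReal.mul_iSup]
  refine iSup_le fun ⟨p, hp⟩ => ?_
  simp only
  have hp0 : (0:ℝ) < p := lt_of_lt_of_le one_pos hp
  -- general Lp bound from a pointwise inequality
  have hLp : ∀ r : ℝ, 1 ≤ r → ∀ B : ℝ, 0 ≤ B →
      (∀ t : ℝ, 0 ≤ t → t ^ r ≤ B * (Real.exp (t ^ α) - 1)) →
      eLpNorm f (ENNReal.ofReal r) (cubeMeasure d) ≤ ENNReal.ofReal (B ^ (1/r)) * K := by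
    intro r hr B hB hpt
    have hr0 : (0:ℝ) < r := lt_of_lt_of_le one_pos hr
    rw [eLpNorm_eq_lintegral_rpow_enorm_toReal (by simp [ENNReal.ofReal_eq_zero]; linarith)
      ENNReal.ofReal_ne_top, ENNReal.toReal_ofReal hr0.le]
    have hcore := lint_core hK'0 hr0.le hB hpt hKint
    calc (∫⁻ x, (‖f x‖₊ : ℝ≥0∞) ^ r ∂(cubeMeasure d)) ^ (1/r)
        ≤ (ENNReal.ofReal B * ENNReal.ofReal (K' ^ r)) ^ (1/r) :=
          ENNReal.rpow_le_rpow hcore (by positivity)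
      _ = ENNReal.ofReal (B ^ (1/r)) * K := by
          rw [ENNReal.mul_rpow_of_nonneg _ _ (by positivity),
            ENNReal.ofReal_rpow_of_nonneg hB (by positivity),
            ENNReal.ofReal_rpow_of_nonneg (by positivity) (by positivity),
            ← Real.rpow_mul hK'0.le, mul_one_div_cancel hr0.ne', Real.rpow_one, hKofReal]
  rcases le_or_gt p α with hcase | hcase
  · -- small exponents: use monotonicity
    have hfα : eLpNorm f (ENNReal.ofReal α) (cubeMeasure d) ≤ K := by
      have h := hLp α hα 1 one_pos.le (fun t ht => by
        have := Real.add_one_le_exp (t ^ α)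
        rw [one_mul]; linarith)
      simpa using h
    calc ENNReal.ofReal (c ^ (1/α)) *
          (ENNReal.ofReal (p ^ (-(1/α))) * eLpNorm f (ENNReal.ofReal p) (cubeMeasure d))
        ≤ 1 * (1 * eLpNorm f (ENNReal.ofReal α) (cubeMeasure d)) := by
          gcongr
          · exact ENNReal.ofReal_le_one.mpr
              (Real.rpow_le_one hc0.le hc1 (by positivity))
          · exact ENNReal.ofReal_le_one.mpr
              (Real.rpow_le_one_of_one_le_of_nonpos hp (neg_nonpos.mpr (by positivity)))
          · exact eLpNorm_le_eLpNorm_of_exponent_le (ENNReal.ofReal_le_ofReal hcase)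
              hf.aestronglyMeasurable
      _ ≤ K := by simpa using hfα
  · -- large exponents
    set q : ℝ := p / α with hqdef
    have hq1 : 1 ≤ q := by
      rw [hqdef, le_div_iff₀ hα0]; linarith
    have hq0 : (0:ℝ) < q := lt_of_lt_of_le one_pos hq1
    have hB : (0:ℝ) ≤ (q/c) ^ q := Real.rpow_nonneg (by positivity) _
    have hpt : ∀ t : ℝ, 0 ≤ t → t ^ p ≤ (q/c) ^ q * (Real.exp (t ^ α) - 1) := by
      intro t ht
      have hk := key_ineq hc0 hc1 hq1 (Real.rpow_nonneg ht α)
      have : (t ^ α) ^ q = t ^ p := by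
        rw [← Real.rpow_mul ht, hqdef, mul_div_cancel₀ _ hα0.ne']
      rwa [this] at hk
    have hLpp := hLp p hp _ hB hpt
    have hreal : c ^ (1/α) * (p ^ (-(1/α)) * ((q/c) ^ q) ^ (1/p)) ≤ 1 := by
      have h1 : ((q/c) ^ q) ^ (1/p) = (q/c) ^ (1/α) := by
        rw [← Real.rpow_mul (by positivity)]
        congr 1
        rw [hqdef]; field_simp
      have h2 : p ^ (-(1/α)) = (p⁻¹) ^ (1/α) := by
        rw [Real.rpow_neg hp0.le, ← Real.inv_rpow hp0.le]
      rw [h1, h2, ← Real.mul_rpow (by positivity) (by positivity),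
        ← Real.mul_rpow (by positivity) (by positivity)]
      have h3 : c * (p⁻¹ * (q/c)) = α⁻¹ := by
        rw [hqdef]; field_simp
      rw [h3]
      exact Real.rpow_le_one (by positivity) (by rw [inv_le_one₀ hα0]; exact hα) (by positivity)
    calc ENNReal.ofReal (c ^ (1/α)) *
          (ENNReal.ofReal (p ^ (-(1/α))) * eLpNorm f (ENNReal.ofReal p) (cubeMeasure d))
        ≤ ENNReal.ofReal (c ^ (1/α)) *
            (ENNReal.ofReal (p ^ (-(1/α))) * (ENNReal.ofReal (((q/c) ^ q) ^ (1/p)) * K)) := by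
          gcongr
      _ = ENNReal.ofReal (c ^ (1/α) * (p ^ (-(1/α)) * ((q/c) ^ q) ^ (1/p))) * K := by
          rw [ENNReal.ofReal_mul (by positivity), ENNReal.ofReal_mul (by positivity)]
          ring
      _ ≤ 1 * K := by
          gcongr
          exact ENNReal.ofReal_le_one.mpr hreal
      _ = K := one_mul K
end

section
/- Let φ: [0,∞) → (0,∞) be non-decreasing with φ(x) → ∞, and suppose there exist r ≥ 0 and C > 0 with φ(p) ≤ C·p^r for all p ≥ 1. Assume that for all N, d there exists an N-point set P ⊂ [0,1]^d with star-discrepancy ‖Δ_P‖_{L_∞} ≤ C_PT √(d/N) for an absolute constant C_PT. Then the inverse discrepancy with respect to ‖·‖_φ satisfies N_φ(ε,d) ≤ ⌈C_PT² · d(d+1)²φ(d)² · ε^{-2} · sup_{p≥1} φ(p)^{-2}⌉ ≤ C' d^{3+2r} ε^{-2} for some constant C' depending only on φ and C_PT. In particular the φ-discrepancy is polynomially tractable with d-exponent at most 3+2r. -/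
open MeasureTheory Filter
open scoped ENNReal Classical

/-- The local discrepancy function `Δ_P(t) = #{j : x_j ∈ [0,t)}/N - t_1⋯t_d` of the point
set `P = {x_1,…,x_N} ⊆ [0,1]^d`.  (For `N = 0` this is the function `t ↦ -t_1⋯t_d`.) -/
noncomputable def localDisc (d N : ℕ) (P : Fin N → (Fin d → ℝ)) (t : Fin d → ℝ) : ℝ :=
  (Finset.univ.filter fun j => ∀ i, P j i < t i).card / N - ∏ i, t i

/-- The norm `‖f‖_φ = sup_{p ≥ 1} ‖f‖_{L_p}/φ(p)` on `[0,1]^d`. -/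
noncomputable def phiNorm (d : ℕ) (φ : ℝ → ℝ) (f : (Fin d → ℝ) → ℝ) : ℝ≥0∞ :=
  ⨆ p : {p : ℝ // 1 ≤ p},
    eLpNorm f (ENNReal.ofReal p.1) (cubeMeasure d) / ENNReal.ofReal (φ p.1)

/-- The `N`-th minimal `φ`-discrepancy `disc_φ(N,d)`: the infimum of `‖Δ_P‖_φ` over all
`N`-point sets `P ⊆ [0,1]^d`. -/
noncomputable def discPhi (d : ℕ) (φ : ℝ → ℝ) (N : ℕ) : ℝ≥0∞ :=
  ⨅ P : {P : Fin N → (Fin d → ℝ) // ∀ j, P j ∈ Set.Icc 0 1},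
    phiNorm d φ (localDisc d N P.1)

/-- The initial `φ`-discrepancy `‖Δ_∅‖_φ` in dimension `d`. -/
noncomputable def initDiscPhi (d : ℕ) (φ : ℝ → ℝ) : ℝ≥0∞ :=
  phiNorm d φ (fun t => -∏ i, t i)

/-- The inverse of the `N`-th minimal `φ`-discrepancy,
`N_φ(ε,d) = min{N : disc_φ(N,d) ≤ ε ‖Δ_∅‖_φ}`. -/
noncomputable def invNPhi (d : ℕ) (φ : ℝ → ℝ) (ε : ℝ) : ℕ :=
  sInf {N : ℕ | discPhi d φ N ≤ ENNReal.ofReal ε * initDiscPhi d φ}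

/- Auxiliary lemmas -/

instance cube_prob (d : ℕ) : IsProbabilityMeasure (cubeMeasure d) := by
  constructor
  rw [cubeMeasure, Measure.restrict_apply_univ, Real.volume_Icc_pi]
  simp

lemma measurable_localDisc (d N : ℕ) (P : Fin N → (Fin d → ℝ)) :
    Measurable (localDisc d N P) := by
  unfold localDisc
  apply Measurable.sub
  · apply Measurable.div_const
    have h : (fun t : Fin d → ℝ =>
        ((Finset.univ.filter fun j => ∀ i, P j i < t i).card : ℝ))
        = fun t => ∑ j : Fin N, Set.indicator {t : Fin d → ℝ | ∀ i, P j i < t i} 1 t := by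
      funext t
      rw [Finset.card_filter]
      push_cast
      refine Finset.sum_congr rfl fun j _ => ?_
      by_cases hj : ∀ i, P j i < t i <;> simp [Set.indicator_apply, hj]
    rw [h]
    apply Finset.measurable_sum
    intro j _
    apply Measurable.indicator measurable_const
    have : {t : Fin d → ℝ | ∀ i, P j i < t i}
        = ⋂ i, (fun t : Fin d → ℝ => t i) ⁻¹' Set.Ioi (P j i) := by
      ext t; simp
    rw [this]
    exact MeasurableSet.iInter fun i => (measurable_pi_apply i) measurableSet_Ioi
  · exact Finset.measurable_prod Finset.univ fun i _ => measurable_pi_apply i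

lemma integral_prod_pow (d : ℕ) :
    ∫ t : Fin d → ℝ in Set.Icc 0 1, |∏ i, t i| ^ d = (1 / ((d : ℝ) + 1)) ^ d := by
  have hcongr : ∀ t ∈ Set.Icc (0 : Fin d → ℝ) 1, |∏ i, t i| ^ d = ∏ i, (t i) ^ d := by
    intro t ht
    rw [abs_of_nonneg (Finset.prod_nonneg fun i _ => ht.1 i), Finset.prod_pow]
  rw [setIntegral_congr_fun measurableSet_Icc hcongr]
  set g : ℝ → ℝ := Set.indicator (Set.Icc (0:ℝ) 1) (fun x => x ^ d) with hg
  have hpt : ∀ t : Fin d → ℝ,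
      Set.indicator (Set.Icc (0 : Fin d → ℝ) 1) (fun t => ∏ i, (t i) ^ d) t = ∏ i, g (t i) := by
    intro t
    by_cases ht : t ∈ Set.Icc (0 : Fin d → ℝ) 1
    · rw [Set.indicator_of_mem ht]
      refine Finset.prod_congr rfl fun i _ => ?_
      exact (Set.indicator_of_mem (Set.mem_Icc.2 ⟨ht.1 i, ht.2 i⟩) _).symm
    · rw [Set.indicator_of_notMem ht]
      have : ∃ i, t i ∉ Set.Icc (0:ℝ) 1 := by
        by_contra hc
        push_neg at hc
        exact ht ⟨fun i => (hc i).1, fun i => (hc i).2⟩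
      obtain ⟨i, hi⟩ := this
      rw [eq_comm]
      exact Finset.prod_eq_zero (Finset.mem_univ i) (Set.indicator_of_notMem hi _)
  rw [← integral_indicator measurableSet_Icc]
  simp_rw [hpt]
  rw [MeasureTheory.integral_fintype_prod_volume_eq_pow (ι := Fin d) g, Fintype.card_fin]
  have : ∫ x : ℝ, g x = 1 / ((d : ℝ) + 1) := by
    rw [hg, integral_indicator measurableSet_Icc, integral_Icc_eq_integral_Ioc,
      ← intervalIntegral.integral_of_le (by norm_num : (0:ℝ) ≤ 1), integral_pow]
    simp
  rw [this]

lemma eLpNorm_neg_prod (d : ℕ) (hd : 1 ≤ d) :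
    eLpNorm (fun t : Fin d → ℝ => -∏ i, t i) (ENNReal.ofReal d) (cubeMeasure d)
      = ENNReal.ofReal (1 / ((d : ℝ) + 1)) := by
  have hd1 : (1 : ℝ) ≤ d := by exact_mod_cast hd
  have hdpos : (0 : ℝ) < d := by linarith
  have hne0 : ENNReal.ofReal (d : ℝ) ≠ 0 := ne_of_gt (ENNReal.ofReal_pos.2 hdpos)
  rw [eLpNorm_eq_lintegral_rpow_enorm_toReal hne0 ENNReal.ofReal_ne_top,
    ENNReal.toReal_ofReal hdpos.le]
  have hint : ∀ t : Fin d → ℝ,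
      (‖-∏ i, t i‖ₑ) ^ (d : ℝ) = ENNReal.ofReal (|∏ i, t i| ^ d) := by
    intro t
    rw [ENNReal.rpow_natCast, enorm_neg, Real.enorm_eq_ofReal_abs,
      ← ENNReal.ofReal_pow (abs_nonneg _)]
  simp_rw [hint]
  have hinteg : Integrable (fun t : Fin d → ℝ => |∏ i, t i| ^ d) (cubeMeasure d) := by
    rw [cubeMeasure]
    apply ContinuousOn.integrableOn_compact isCompact_Icc
    exact Continuous.continuousOn
      ((continuous_finset_prod Finset.univ fun i _ => continuous_apply i).abs.pow d)
  rw [← MeasureTheory.ofReal_integral_eq_lintegral_ofReal hinteg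
    (Filter.Eventually.of_forall fun t => by positivity)]
  rw [cubeMeasure] at *
  rw [show (∫ t : Fin d → ℝ, |∏ i, t i| ^ d ∂(volume.restrict (Set.Icc 0 1)))
      = (1 / ((d : ℝ) + 1)) ^ d from integral_prod_pow d]
  rw [ENNReal.ofReal_pow (by positivity), ← ENNReal.rpow_natCast _ d, ← ENNReal.rpow_mul]
  rw [mul_one_div_cancel (by positivity : (d:ℝ) ≠ 0), ENNReal.rpow_one]

lemma phiNorm_le_top (d : ℕ) (φ : ℝ → ℝ) (hpos : ∀ x ≥ (0:ℝ), 0 < φ x)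
    (hmono : MonotoneOn φ (Set.Ici 0)) (f : (Fin d → ℝ) → ℝ)
    (hf : AEStronglyMeasurable f (cubeMeasure d)) :
    phiNorm d φ f ≤ eLpNorm f ⊤ (cubeMeasure d) * ENNReal.ofReal (φ 1)⁻¹ := by
  apply iSup_le
  rintro ⟨p, hp⟩
  rw [div_eq_mul_inv]
  refine mul_le_mul' (eLpNorm_le_eLpNorm_of_exponent_le le_top hf) ?_
  rw [← ENNReal.ofReal_inv_of_pos (hpos p (by linarith))]
  apply ENNReal.ofReal_le_ofReal
  exact inv_anti₀ (hpos 1 (by norm_num))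
    (hmono (Set.mem_Ici.2 (by norm_num)) (Set.mem_Ici.2 (by linarith)) hp)

lemma sup_inv_sq (φ : ℝ → ℝ) (hpos : ∀ x ≥ (0:ℝ), 0 < φ x)
    (hmono : MonotoneOn φ (Set.Ici 0)) :
    (⨆ p : {p : ℝ // 1 ≤ p}, (φ p.1)⁻¹ ^ 2) = (φ 1)⁻¹ ^ 2 := by
  have key : ∀ p : {p : ℝ // 1 ≤ p}, (φ p.1)⁻¹ ^ 2 ≤ (φ 1)⁻¹ ^ 2 := by
    rintro ⟨p, hp⟩
    have h1 : 0 < φ 1 := hpos 1 (by norm_num)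
    have h2 : φ 1 ≤ φ p := hmono (Set.mem_Ici.2 (by norm_num)) (Set.mem_Ici.2 (by linarith)) hp
    have h3 : 0 < φ p := lt_of_lt_of_le h1 h2
    exact pow_le_pow_left₀ (inv_nonneg.2 h3.le) (inv_anti₀ h1 h2) 2
  apply le_antisymm (ciSup_le key)
  refine le_ciSup (f := fun p : {p : ℝ // 1 ≤ p} => (φ p.1)⁻¹ ^ 2) ⟨(φ 1)⁻¹ ^ 2, ?_⟩ ⟨1, le_refl 1⟩
  rintro x ⟨p, rfl⟩
  exact key p

theorem phi_discrepancy_polynomially_tractable (φ : ℝ → ℝ)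
    (hpos : ∀ x ≥ (0 : ℝ), 0 < φ x) (hmono : MonotoneOn φ (Set.Ici 0))
    (htend : Tendsto φ atTop atTop)
    (r C : ℝ) (hr : 0 ≤ r) (hC : 0 < C) (hgrow : ∀ p ≥ (1 : ℝ), φ p ≤ C * p ^ r)
    (CPT : ℝ) (hCPT : 0 < CPT)
    (hstar : ∀ d : ℕ, 1 ≤ d → ∀ N : ℕ, 1 ≤ N → ∃ P : Fin N → (Fin d → ℝ),
      (∀ j, P j ∈ Set.Icc 0 1) ∧
      eLpNorm (localDisc d N P) ⊤ (cubeMeasure d) ≤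
        ENNReal.ofReal (CPT * Real.sqrt (d / N))) :
    (∀ d : ℕ, 1 ≤ d → ∀ ε ∈ Set.Ioo (0 : ℝ) 1,
      invNPhi d φ ε ≤
        ⌈CPT ^ 2 * d * (d + 1) ^ 2 * φ d ^ 2 * ε⁻¹ ^ 2 *
          ⨆ p : {p : ℝ // 1 ≤ p}, (φ p.1)⁻¹ ^ 2⌉₊) ∧
    ∃ C' > (0 : ℝ), ∀ d : ℕ, 1 ≤ d → ∀ ε ∈ Set.Ioo (0 : ℝ) 1,
      (invNPhi d φ ε : ℝ) ≤ C' * (d : ℝ) ^ (3 + 2 * r) * ε⁻¹ ^ 2 := by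
  have hφ1 : 0 < φ 1 := hpos 1 (by norm_num)
  have hsup := sup_inv_sq φ hpos hmono
  have main : ∀ d : ℕ, 1 ≤ d → ∀ ε ∈ Set.Ioo (0 : ℝ) 1,
      invNPhi d φ ε ≤
        ⌈CPT ^ 2 * d * (d + 1) ^ 2 * φ d ^ 2 * ε⁻¹ ^ 2 *
          ⨆ p : {p : ℝ // 1 ≤ p}, (φ p.1)⁻¹ ^ 2⌉₊ := by
    intro d hd ε hε
    rw [hsup]
    obtain ⟨hε0, hε1⟩ := hε
    have hd1 : (1:ℝ) ≤ (d:ℝ) := by exact_mod_cast hd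
    have hdpos : (0:ℝ) < d := by linarith
    have hφd : 0 < φ d := hpos d (by positivity)
    set S : ℝ := (φ 1)⁻¹ with hS
    have hSpos : 0 < S := by rw [hS]; positivity
    set M : ℝ := CPT ^ 2 * (d:ℝ) * ((d:ℝ) + 1) ^ 2 * φ (d:ℝ) ^ 2 * ε⁻¹ ^ 2 * S ^ 2 with hM
    have hMpos : 0 < M := by rw [hM]; positivity
    set N : ℕ := ⌈M⌉₊ with hN
    have hN1 : 1 ≤ N := Nat.ceil_pos.2 hMpos
    unfold invNPhi
    apply Nat.sInf_le
    simp only [Set.mem_setOf_eq]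
    obtain ⟨P, hP, hPdisc⟩ := hstar d hd N hN1
    set B : ℝ := CPT * ((d:ℝ) + 1) * φ (d:ℝ) * S with hB
    have hBpos : 0 < B := by rw [hB]; positivity
    have hMN : M ≤ (N:ℝ) := Nat.le_ceil M
    have hMB : M = (d:ℝ) * (B / ε) ^ 2 := by rw [hM, hB]; field_simp
    have hdN : (d:ℝ) / N ≤ (ε / B) ^ 2 := by
      have h1 : (d:ℝ)/N ≤ (d:ℝ)/M := div_le_div_of_nonneg_left hdpos.le hMpos hMN
      have h2 : (d:ℝ)/M = (ε/B)^2 := by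
        rw [hMB]; field_simp
      linarith [h1, h2.le]
    have hsqrt : Real.sqrt ((d:ℝ)/N) ≤ ε / B := by
      calc Real.sqrt ((d:ℝ)/N) ≤ Real.sqrt ((ε/B)^2) := Real.sqrt_le_sqrt hdN
        _ = ε / B := Real.sqrt_sq (by positivity)
    have hkey : CPT * Real.sqrt ((d:ℝ)/N) * S ≤ ε * (1 / (((d:ℝ)+1) * φ (d:ℝ))) := by
      have heq : CPT * (ε / B) * S = ε * (1 / (((d:ℝ)+1) * φ (d:ℝ))) := by
        rw [hB, hS]; field_simp
      calc CPT * Real.sqrt ((d:ℝ)/N) * S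
          ≤ CPT * (ε/B) * S :=
            mul_le_mul_of_nonneg_right (mul_le_mul_of_nonneg_left hsqrt hCPT.le) hSpos.le
        _ = _ := heq
    have hup : discPhi d φ N ≤ ENNReal.ofReal (CPT * Real.sqrt ((d:ℝ)/(N:ℝ)) * S) := by
      calc discPhi d φ N
          ≤ phiNorm d φ (localDisc d N P) :=
            iInf_le (fun Q : {P : Fin N → (Fin d → ℝ) // ∀ j, P j ∈ Set.Icc 0 1} =>
              phiNorm d φ (localDisc d N Q.1)) ⟨P, hP⟩
        _ ≤ eLpNorm (localDisc d N P) ⊤ (cubeMeasure d) * ENNReal.ofReal S :=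
            phiNorm_le_top d φ hpos hmono _ (measurable_localDisc d N P).aestronglyMeasurable
        _ ≤ ENNReal.ofReal (CPT * Real.sqrt ((d:ℝ)/(N:ℝ))) * ENNReal.ofReal S :=
            mul_le_mul_left hPdisc _
        _ = ENNReal.ofReal (CPT * Real.sqrt ((d:ℝ)/(N:ℝ)) * S) :=
            (ENNReal.ofReal_mul (by positivity)).symm
    have hinit : ENNReal.ofReal (1 / (((d:ℝ)+1) * φ (d:ℝ))) ≤ initDiscPhi d φ := by
      have h : eLpNorm (fun t : Fin d → ℝ => -∏ i, t i) (ENNReal.ofReal (d:ℝ)) (cubeMeasure d)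
            / ENNReal.ofReal (φ (d:ℝ))
          ≤ ⨆ p : {p : ℝ // 1 ≤ p},
              eLpNorm (fun t : Fin d → ℝ => -∏ i, t i) (ENNReal.ofReal p.1) (cubeMeasure d)
                / ENNReal.ofReal (φ p.1) :=
        le_iSup (fun p : {p : ℝ // 1 ≤ p} =>
          eLpNorm (fun t : Fin d → ℝ => -∏ i, t i) (ENNReal.ofReal p.1) (cubeMeasure d)
            / ENNReal.ofReal (φ p.1)) ⟨(d:ℝ), hd1⟩
      rw [eLpNorm_neg_prod d hd] at h
      unfold initDiscPhi phiNorm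
      refine le_trans (le_of_eq ?_) h
      rw [show (1 / (((d:ℝ)+1) * φ (d:ℝ))) = (1/((d:ℝ)+1)) / φ (d:ℝ) by rw [div_div]]
      exact ENNReal.ofReal_div_of_pos hφd
    calc discPhi d φ N ≤ ENNReal.ofReal (CPT * Real.sqrt ((d:ℝ)/(N:ℝ)) * S) := hup
      _ ≤ ENNReal.ofReal (ε * (1 / (((d:ℝ)+1) * φ (d:ℝ)))) := ENNReal.ofReal_le_ofReal hkey
      _ = ENNReal.ofReal ε * ENNReal.ofReal (1 / (((d:ℝ)+1) * φ (d:ℝ))) :=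
          ENNReal.ofReal_mul hε0.le
      _ ≤ ENNReal.ofReal ε * initDiscPhi d φ := mul_le_mul_right hinit _
  refine ⟨main, ⟨4 * CPT ^ 2 * C ^ 2 * (φ 1)⁻¹ ^ 2 + 1, by positivity, ?_⟩⟩
  intro d hd ε hε
  obtain ⟨hε0, hε1⟩ := hε
  have hd1 : (1:ℝ) ≤ (d:ℝ) := by exact_mod_cast hd
  have hdpos : (0:ℝ) < d := by linarith
  have hφd : 0 < φ d := hpos d (by positivity)
  have hεinv : 1 ≤ ε⁻¹ ^ 2 := by
    have h := (one_le_inv₀ hε0).2 hε1.le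
    nlinarith
  have hdr : 1 ≤ (d:ℝ) ^ (3 + 2*r) := Real.one_le_rpow hd1 (by linarith)
  have h1 := main d hd ε ⟨hε0, hε1⟩
  rw [hsup] at h1
  set M : ℝ := CPT ^ 2 * (d:ℝ) * ((d:ℝ) + 1) ^ 2 * φ (d:ℝ) ^ 2 * ε⁻¹ ^ 2 * (φ 1)⁻¹ ^ 2 with hM
  have hM0 : 0 ≤ M := by rw [hM]; positivity
  have hceil : ((⌈M⌉₊ : ℕ) : ℝ) ≤ M + 1 := le_of_lt (Nat.ceil_lt_add_one hM0)
  have hrd : (d:ℝ) * (d:ℝ)^2 * ((d:ℝ)^r)^2 = (d:ℝ) ^ (3 + 2*r) := by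
    rw [Real.rpow_add hdpos, show (2*r) = r*2 by ring, Real.rpow_mul hdpos.le,
      show ((3:ℝ) = ((3:ℕ):ℝ)) by norm_num, Real.rpow_natCast,
      show (((2:ℝ)) = ((2:ℕ):ℝ)) by norm_num, Real.rpow_natCast]
    ring
  have hbound : M ≤ 4 * CPT ^ 2 * C ^ 2 * (φ 1)⁻¹ ^ 2 * ((d:ℝ) ^ (3 + 2*r)) * ε⁻¹ ^ 2 := by
    have hg := hgrow d hd1
    have e1 : ((d:ℝ) + 1) ^ 2 ≤ (2*(d:ℝ)) ^ 2 :=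
      pow_le_pow_left₀ (by linarith) (by linarith) 2
    have e2 : φ (d:ℝ) ^ 2 ≤ (C * (d:ℝ)^r) ^ 2 := pow_le_pow_left₀ hφd.le hg 2
    have e3 : ((d:ℝ)+1)^2 * φ (d:ℝ)^2 ≤ (2*(d:ℝ))^2 * (C * (d:ℝ)^r)^2 :=
      mul_le_mul e1 e2 (sq_nonneg _) (sq_nonneg _)
    calc M = (CPT^2*(d:ℝ)*ε⁻¹^2*(φ 1)⁻¹^2) * (((d:ℝ)+1)^2 * φ (d:ℝ)^2) := by rw [hM]; ring
      _ ≤ (CPT^2*(d:ℝ)*ε⁻¹^2*(φ 1)⁻¹^2) * ((2*(d:ℝ))^2 * (C * (d:ℝ)^r)^2) :=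
          mul_le_mul_of_nonneg_left e3 (by positivity)
      _ = 4 * CPT ^ 2 * C ^ 2 * (φ 1)⁻¹ ^ 2 * ((d:ℝ) * (d:ℝ)^2 * ((d:ℝ)^r)^2) * ε⁻¹ ^ 2 := by
          ring
      _ = _ := by rw [hrd]
  have hX : 1 ≤ (d:ℝ)^(3+2*r) * ε⁻¹^2 := by nlinarith [hdr, hεinv]
  have ha : (0:ℝ) ≤ 4 * CPT ^ 2 * C ^ 2 * (φ 1)⁻¹ ^ 2 := by positivity
  calc (invNPhi d φ ε : ℝ) ≤ (⌈M⌉₊ : ℝ) := Nat.cast_le.2 h1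
    _ ≤ M + 1 := hceil
    _ ≤ 4 * CPT ^ 2 * C ^ 2 * (φ 1)⁻¹ ^ 2 * ((d:ℝ) ^ (3 + 2*r)) * ε⁻¹ ^ 2 + 1 := by
        linarith
    _ ≤ (4 * CPT ^ 2 * C ^ 2 * (φ 1)⁻¹ ^ 2 + 1) * (d:ℝ) ^ (3 + 2*r) * ε⁻¹ ^ 2 := by
        nlinarith [hX, ha, mul_le_mul_of_nonneg_left hX ha]
end

section
/- Let α ≥ 1 and let d ≥ 1 be an integer. Given constants a > 0 and N ∈ ℕ with disc bound ‖Δ_P‖_α ≤ a·N^{-1/2}·max{1, d^{1/2−1/α}} for some N-point set P, and the initial bound ‖Δ_∅‖_α ≥ 1/(4 (d log(d+1))^{1/α}), the inverse discrepancy satisfies N_α(ε,d) ≤ ⌈16a² · d^{max{1, 2/α}} · (log(d+1))^{2/α} · ε^{-2}⌉ for all ε ∈ (0,1). -/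
open MeasureTheory
open scoped ENNReal Classical

/-- The norm `‖f‖_α = sup_{p ≥ 1} p^{-1/α} ‖f‖_{L_p}` on `[0,1]^d`. -/
noncomputable def alphaNorm (d : ℕ) (α : ℝ) (f : (Fin d → ℝ) → ℝ) : ℝ≥0∞ :=
  ⨆ p : {p : ℝ // 1 ≤ p},
    ENNReal.ofReal (p.1 ^ (-(1 / α))) * eLpNorm f (ENNReal.ofReal p.1) (cubeMeasure d)

/-- The `N`-th minimal `α`-discrepancy: infimum of `‖Δ_P‖_α` over `N`-point sets in the cube. -/
noncomputable def discAlpha (d : ℕ) (α : ℝ) (N : ℕ) : ℝ≥0∞ :=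
  ⨅ P : {P : Fin N → (Fin d → ℝ) // ∀ j, P j ∈ Set.Icc 0 1},
    alphaNorm d α (localDisc d N P.1)

/-- The initial `α`-discrepancy `‖Δ_∅‖_α` in dimension `d`. -/
noncomputable def initDiscAlpha (d : ℕ) (α : ℝ) : ℝ≥0∞ :=
  alphaNorm d α (fun t => -∏ i, t i)

/-- `N_α(ε,d) = min{N : disc_α(N,d) ≤ ε ‖Δ_∅‖_α}`. -/
noncomputable def invNAlpha (d : ℕ) (α : ℝ) (ε : ℝ) : ℕ :=
  sInf {N : ℕ | discAlpha d α N ≤ ENNReal.ofReal ε * initDiscAlpha d α}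

/-- Let `α ≥ 1` and `d ≥ 1`.  If for each `N ≥ 1` there is an `N`-point set
`P` with `‖Δ_P‖_α ≤ a N^{-1/2} max{1, d^{1/2-1/α}}` (i.e. `disc_α(N,d)` obeys this bound) and
the initial discrepancy satisfies `‖Δ_∅‖_α ≥ 1/(4 (d log(d+1))^{1/α})`, then
`N_α(ε,d) ≤ ⌈16 a² d^{max{1,2/α}} (log(d+1))^{2/α} ε^{-2}⌉` for all `ε ∈ (0,1)`. -/
theorem invNAlpha_upper_bound (α : ℝ) (hα : 1 ≤ α) (d : ℕ) (hd : 1 ≤ d)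
    (a : ℝ) (ha : 0 < a)
    (hdisc : ∀ N : ℕ, 1 ≤ N → discAlpha d α N ≤
      ENNReal.ofReal (a * (N : ℝ) ^ (-(1 / 2 : ℝ)) * max 1 ((d : ℝ) ^ ((1 : ℝ) / 2 - 1 / α))))
    (hinit : ENNReal.ofReal (1 / (4 * ((d : ℝ) * Real.log (d + 1)) ^ (1 / α))) ≤
      initDiscAlpha d α) :
    ∀ ε ∈ Set.Ioo (0 : ℝ) 1,
      invNAlpha d α ε ≤
        ⌈16 * a ^ 2 * (d : ℝ) ^ max 1 (2 / α) * Real.log (d + 1) ^ (2 / α) * ε⁻¹ ^ 2⌉₊ := by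
  intro ε hε
  obtain ⟨hε0, hε1⟩ := hε
  have hd1 : (1 : ℝ) ≤ d := by exact_mod_cast hd
  have hd0 : (0 : ℝ) < d := by linarith
  have hαpos : 0 < α := lt_of_lt_of_le one_pos hα
  set L := Real.log (d + 1) with hL
  have hLpos : 0 < L := Real.log_pos (by linarith)
  set C := ((d : ℝ) * L) ^ ((1 : ℝ) / α) with hC
  have hCpos : 0 < C := Real.rpow_pos_of_pos (by positivity) _
  set M := max 1 ((d : ℝ) ^ ((1 : ℝ) / 2 - 1 / α)) with hM
  have hM1 : (1 : ℝ) ≤ M := le_max_left _ _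
  have hMpos : 0 < M := lt_of_lt_of_le one_pos hM1
  -- monotone exponentiation with base d
  have hmono : Monotone fun x : ℝ => (d : ℝ) ^ x := fun x y hxy =>
    Real.rpow_le_rpow_of_exponent_le hd1 hxy
  -- key identity
  have hkey : 16 * a ^ 2 * (d : ℝ) ^ max 1 (2 / α) * L ^ (2 / α) * ε⁻¹ ^ 2
      = (4 * a * C * M / ε) ^ 2 := by
    have hC2 : C ^ 2 = (d : ℝ) ^ ((2 : ℝ) / α) * L ^ ((2 : ℝ) / α) := by
      rw [hC, sq, ← Real.rpow_add (by positivity),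
        show (1 : ℝ) / α + 1 / α = 2 / α by ring,
        Real.mul_rpow hd0.le hLpos.le]
    have hM2 : M ^ 2 = (d : ℝ) ^ max (0 : ℝ) (1 - 2 / α) := by
      have h1 : M = (d : ℝ) ^ max (0 : ℝ) ((1 : ℝ) / 2 - 1 / α) := by
        rw [hM, hmono.map_max, Real.rpow_zero]
      rw [h1, sq, ← Real.rpow_add hd0,
        show max (0 : ℝ) ((1 : ℝ) / 2 - 1 / α) + max (0 : ℝ) ((1 : ℝ) / 2 - 1 / α)
          = max (0 : ℝ) (1 - 2 / α) by
          have hdiv : (1 : ℝ) - 2 / α = 2 * (1 / 2 - 1 / α) := by ring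
          rcases le_total ((1 : ℝ) / 2 - 1 / α) 0 with h | h
          · rw [max_eq_left h, max_eq_left (by linarith)]; ring
          · rw [max_eq_right h, max_eq_right (by linarith)]; ring]
    have hmain : (d : ℝ) ^ max (1 : ℝ) (2 / α)
        = (d : ℝ) ^ ((2 : ℝ) / α) * (d : ℝ) ^ max (0 : ℝ) (1 - 2 / α) := by
      rw [← Real.rpow_add hd0]
      congr 1
      rcases le_total ((2 : ℝ) / α) 1 with h | h
      · rw [max_eq_left h, max_eq_right (by linarith)]; ring
      · rw [max_eq_right h, max_eq_left (by linarith)]; ring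
    rw [div_pow, mul_pow, mul_pow, mul_pow, hC2, hM2, hmain]
    rw [show (ε⁻¹ : ℝ) ^ 2 = (ε ^ 2)⁻¹ by rw [inv_pow]]
    field_simp
    ring
  set N := ⌈16 * a ^ 2 * (d : ℝ) ^ max 1 (2 / α) * L ^ (2 / α) * ε⁻¹ ^ 2⌉₊ with hNdef
  have hNpos : 0 < N := Nat.ceil_pos.mpr (by rw [hkey]; positivity)
  have hNK : (4 * a * C * M / ε) ^ 2 ≤ (N : ℝ) := by
    rw [← hkey]; exact Nat.le_ceil _
  have hKpos : 0 < 4 * a * C * M / ε := by positivity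
  have hsqrt : 4 * a * C * M / ε ≤ Real.sqrt N := by
    rw [show (4 * a * C * M / ε : ℝ) = Real.sqrt ((4 * a * C * M / ε) ^ 2) by
      rw [Real.sqrt_sq hKpos.le]]
    exact Real.sqrt_le_sqrt hNK
  have hsqrtpos : 0 < Real.sqrt N := lt_of_lt_of_le hKpos hsqrt
  -- the real inequality
  have hreal : a * (N : ℝ) ^ (-(1 / 2 : ℝ)) * M ≤ ε * (1 / (4 * C)) := by
    have hrw : (N : ℝ) ^ (-(1 / 2 : ℝ)) = (Real.sqrt N)⁻¹ := by
      rw [Real.rpow_neg (Nat.cast_nonneg N), Real.sqrt_eq_rpow]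
    rw [hrw]
    have hinv : (Real.sqrt N)⁻¹ ≤ (4 * a * C * M / ε)⁻¹ :=
      inv_anti₀ hKpos hsqrt
    calc a * (Real.sqrt N)⁻¹ * M ≤ a * (4 * a * C * M / ε)⁻¹ * M := by
          apply mul_le_mul_of_nonneg_right _ hMpos.le
          exact mul_le_mul_of_nonneg_left hinv ha.le
      _ = ε * (1 / (4 * C)) := by
          field_simp
  -- conclude in ℝ≥0∞
  have hmem : N ∈ {N : ℕ | discAlpha d α N ≤ ENNReal.ofReal ε * initDiscAlpha d α} := by
    have h1 := hdisc N hNpos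
    calc discAlpha d α N
        ≤ ENNReal.ofReal (a * (N : ℝ) ^ (-(1 / 2 : ℝ)) * M) := h1
      _ ≤ ENNReal.ofReal (ε * (1 / (4 * C))) := ENNReal.ofReal_le_ofReal hreal
      _ = ENNReal.ofReal ε * ENNReal.ofReal (1 / (4 * C)) := ENNReal.ofReal_mul hε0.le
      _ ≤ ENNReal.ofReal ε * initDiscAlpha d α := mul_le_mul_right hinit _
  exact Nat.sInf_le hmem
end
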